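/- Define K₀(z,w;T) = (z w̄ / π) e^{-(z² + w̄²)/(4T)} (1/(z² + w̄²)² + 1/(4T(z² + w̄²))) for z, w in the sector Δ = {z ∈ ℂ : |arg z| < π/4} and T > 0. Then the double series Σ_{m,n ∈ ℤ} K₀(z + 2n, w + 2m; T) converges absolutely and uniformly on cl(D) × D, where D is the open square with vertices 0, 1+i, 2, 1-i. -/

import Mathlib

/-!
For `z, w` in the closed square and `|n| ≥ 3` or `|m| ≥ 3`, the real part of
`Q = (z + 2n)² + (w̄ + 2m)²` is at least `4(n² - 2|n|) + 4(m² - 2|m|) ≥ 8`. This bounds the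
rational factor of `K₀` by a constant and its Gaussian factor by
`exp(-(n² - 2|n|)/T) · exp(-(m² - 2|m|)/T)`, so off finitely many indices the terms are dominated,
uniformly on `cl(D) × D`, by the summable product `φ(n) φ(m)` with
`φ(k) = (|k| + 1) exp(-(k² - 2|k|)/T)`. The Weierstrass M-test then gives both absolute and
uniform convergence.
-/

open Complex Filter

/-- The open square `D` with vertices `0, 1+i, 2, 1-i`, viewed in `ℂ`. -/
def Dsq : Set ℂ := {z : ℂ | |z.im| < z.re ∧ |z.im| < 2 - z.re}

/-- The kernel `K₀(z,w;T)` on the sector `Δ` (and wherever `z² + w̄² ≠ 0`). -/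
noncomputable def K0 (z w : ℂ) (T : ℝ) : ℂ :=
  (z * (starRingEnd ℂ) w / (Real.pi : ℂ)) *
    Complex.exp (-(z ^ 2 + ((starRingEnd ℂ) w) ^ 2) / (4 * (T : ℂ))) *
    (1 / (z ^ 2 + ((starRingEnd ℂ) w) ^ 2) ^ 2 +
      1 / (4 * (T : ℂ) * (z ^ 2 + ((starRingEnd ℂ) w) ^ 2)))

open ComplexConjugate Real

def closedSquare : Set ℂ := {z : ℂ | |z.im| ≤ z.re ∧ |z.im| ≤ 2 - z.re}

lemma isClosed_closedSquare : IsClosed closedSquare :=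
  (isClosed_le (f := fun z : ℂ => |z.im|) (by fun_prop) (by fun_prop)).inter
    (isClosed_le (f := fun z : ℂ => |z.im|) (g := fun z => 2 - z.re) (by fun_prop) (by fun_prop))

lemma closure_Dsq_subset_closedSquare : closure Dsq ⊆ closedSquare :=
  closure_minimal (fun _ hz => ⟨hz.1.le, hz.2.le⟩) isClosed_closedSquare

lemma conj_mem_closedSquare {z : ℂ} (hz : z ∈ closedSquare) : conj z ∈ closedSquare := by
  simpa [closedSquare] using hz

lemma norm_le_two_of_mem_closedSquare {z : ℂ} (hz : z ∈ closedSquare) : ‖z‖ ≤ 2 := by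
  have hre : 0 ≤ z.re := (abs_nonneg _).trans hz.1
  calc ‖z‖ ≤ |z.re| + |z.im| := norm_le_abs_re_add_abs_im z
    _ ≤ 2 := by rw [abs_of_nonneg hre]; linarith [hz.2]

lemma re_sq_add_two_mul_ge {z : ℂ} (hz : z ∈ closedSquare) (t : ℝ) :
    4 * t ^ 2 - 8 * |t| ≤ ((z + 2 * t) ^ 2).re := by
  obtain ⟨h1, h2⟩ := hz
  have hsq : ((z + 2 * t) ^ 2).re = (z.re + 2 * t) ^ 2 - z.im ^ 2 := by
    simp [sq]
  have hb : z.im ^ 2 ≤ z.re ^ 2 := by nlinarith [sq_abs z.im, abs_nonneg z.im]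
  rw [hsq]
  rcases le_total 0 t with ht | ht
  · rw [abs_of_nonneg ht]; nlinarith [abs_nonneg z.im]
  · rw [abs_of_nonpos ht]; nlinarith [abs_nonneg z.im]

lemma norm_K0_le {u v : ℂ} {T r R : ℝ} (hT : 0 < T) (hr : 0 < r)
    (hrR : r ≤ R) (hR : R ≤ (u ^ 2 + conj v ^ 2).re) :
    ‖K0 u v T‖ ≤ ‖u‖ * ‖v‖ / π * Real.exp (-R / (4 * T)) * (1 / r ^ 2 + 1 / (4 * T * r)) := by
  set Q := u ^ 2 + conj v ^ 2
  have hrQ : r ≤ ‖Q‖ := hrR.trans (hR.trans (re_le_norm Q))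
  have hexp : ‖cexp (-Q / (4 * T))‖ ≤ Real.exp (-R / (4 * T)) := by
    rw [norm_exp, show (4 : ℂ) * T = ((4 * T : ℝ) : ℂ) by push_cast; rfl, div_ofReal_re, neg_re]
    gcongr
  have hfrac : ‖1 / Q ^ 2 + 1 / (4 * T * Q)‖ ≤ 1 / r ^ 2 + 1 / (4 * T * r) := by
    refine (norm_add_le _ _).trans (add_le_add ?_ ?_)
    · rw [norm_div, norm_one, norm_pow]; gcongr
    · rw [norm_div, norm_one, norm_mul, norm_mul, norm_real, Real.norm_of_nonneg hT.le]
      norm_num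
      gcongr
  rw [K0, norm_mul, norm_mul, norm_div, norm_mul, norm_conj, norm_real,
    Real.norm_of_nonneg pi_pos.le]
  gcongr

noncomputable def gaussianMajorant (T : ℝ) (k : ℤ) : ℝ :=
  (|(k : ℝ)| + 1) * Real.exp (-((k : ℝ) ^ 2 - 2 * |(k : ℝ)|) / T)

lemma summable_gaussianMajorant {T : ℝ} (hT : 0 < T) : Summable (gaussianMajorant T) := by
  have key (j : ℕ) :
      Summable fun k : ℤ => |(k : ℝ)| ^ j * Real.exp (-((k : ℝ) ^ 2 - 2 * |(k : ℝ)|) / T) := by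
    convert summable_pow_mul_jacobiTheta₂_term_bound (1 / (π * T)) (T := 1 / (π * T))
      (by positivity) j using 3 with k
    · rw [Int.cast_abs]
    · rw [Int.cast_abs]
      congr 1
      field_simp
  refine ((key 1).add (key 0)).congr fun k => ?_
  simp only [gaussianMajorant]
  ring

lemma eventually_cofinite_three_le_abs :
    ∀ᶠ nm : ℤ × ℤ in cofinite, 3 ≤ |nm.1| ∨ 3 ≤ |nm.2| := by
  refine (Set.finite_Icc ((-2, -2) : ℤ × ℤ) (2, 2)).subset fun nm h => ?_
  obtain ⟨n, m⟩ := nm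
  have : |n| < 3 ∧ |m| < 3 := by simpa using h
  simp only [abs_lt] at this
  simp only [Set.mem_Icc, Prod.mk_le_mk]
  omega

lemma norm_K0_shift_le {z w : ℂ} (hz : z ∈ closedSquare) (hw : w ∈ closedSquare) {T : ℝ}
    (hT : 0 < T) {n m : ℤ} (hnm : 3 ≤ |n| ∨ 3 ≤ |m|) :
    ‖K0 (z + 2 * n) (w + 2 * m) T‖ ≤
      4 / π * (1 / 8 ^ 2 + 1 / (4 * T * 8)) * (gaussianMajorant T n * gaussianMajorant T m) := by
  set R : ℝ := 4 * ((n : ℝ) ^ 2 - 2 * |(n : ℝ)|) + 4 * ((m : ℝ) ^ 2 - 2 * |(m : ℝ)|)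
  have hR : R ≤ ((z + 2 * n) ^ 2 + conj (w + 2 * m) ^ 2).re := by
    have hzn := re_sq_add_two_mul_ge hz n
    have hwm := re_sq_add_two_mul_ge (conj_mem_closedSquare hw) m
    simp only [ofReal_intCast] at hzn hwm
    simp only [map_add, map_mul, map_ofNat, map_intCast, add_re]
    linarith
  have h8 : 8 ≤ R := by
    have hlow (k : ℤ) : -1 ≤ (k : ℝ) ^ 2 - 2 * |(k : ℝ)| := by
      nlinarith [sq_abs (k : ℝ), sq_nonneg (|(k : ℝ)| - 1)]
    have hhigh (k : ℤ) (hk : 3 ≤ |k|) : 3 ≤ (k : ℝ) ^ 2 - 2 * |(k : ℝ)| := by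
      have : (3 : ℝ) ≤ |(k : ℝ)| := by exact_mod_cast hk
      nlinarith [sq_abs (k : ℝ)]
    rcases hnm with h | h
    · linarith [hhigh n h, hlow m]
    · linarith [hhigh m h, hlow n]
  have hshift (ζ : ℂ) (hζ : ζ ∈ closedSquare) (k : ℤ) : ‖ζ + 2 * k‖ ≤ 2 * (|(k : ℝ)| + 1) := by
    have := norm_le_two_of_mem_closedSquare hζ
    have : ‖(2 : ℂ) * k‖ = 2 * |(k : ℝ)| := by simp
    linarith [norm_add_le ζ (2 * k)]
  have hexp : Real.exp (-R / (4 * T)) =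
      Real.exp (-((n : ℝ) ^ 2 - 2 * |(n : ℝ)|) / T) *
        Real.exp (-((m : ℝ) ^ 2 - 2 * |(m : ℝ)|) / T) := by
    rw [← Real.exp_add]
    simp only [R]
    congr 1
    field_simp
    ring
  calc ‖K0 (z + 2 * n) (w + 2 * m) T‖
      ≤ ‖z + 2 * n‖ * ‖w + 2 * m‖ / π * Real.exp (-R / (4 * T)) *
          (1 / 8 ^ 2 + 1 / (4 * T * 8)) := norm_K0_le hT (by norm_num) h8 hR
    _ ≤ 2 * (|(n : ℝ)| + 1) * (2 * (|(m : ℝ)| + 1)) / π * Real.exp (-R / (4 * T)) *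
          (1 / 8 ^ 2 + 1 / (4 * T * 8)) := by
        gcongr
        exacts [hshift z hz n, hshift w hw m]
    _ = _ := by
        rw [hexp, gaussianMajorant, gaussianMajorant]
        ring

/-- For `T > 0`, the double series `Σ_{m,n∈ℤ} K₀(z+2n, w+2m; T)` converges absolutely
for each `(z,w) ∈ cl(D) × D`, and the net of finite partial sums converges uniformly
on `cl(D) × D`. -/
theorem K0_series_converges (T : ℝ) (hT : 0 < T) :
    (∀ z ∈ closure Dsq, ∀ w ∈ Dsq,
      Summable (fun p : ℤ × ℤ => ‖K0 (z + 2 * (p.1 : ℂ)) (w + 2 * (p.2 : ℂ)) T‖)) ∧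
    ∃ K : ℂ × ℂ → ℂ,
      TendstoUniformlyOn
        (fun (s : Finset (ℤ × ℤ)) (p : ℂ × ℂ) =>
          ∑ nm ∈ s, K0 (p.1 + 2 * (nm.1 : ℂ)) (p.2 + 2 * (nm.2 : ℂ)) T)
        K atTop (closure Dsq ×ˢ Dsq) := by
  set M : ℤ × ℤ → ℝ := fun nm =>
    4 / π * (1 / 8 ^ 2 + 1 / (4 * T * 8)) * (gaussianMajorant T nm.1 * gaussianMajorant T nm.2)
  have hM : Summable M := by
    have hφ := summable_gaussianMajorant hT
    have hφ₀ (k : ℤ) : 0 ≤ gaussianMajorant T k := by unfold gaussianMajorant; positivity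
    exact (hφ.mul_of_nonneg hφ hφ₀ hφ₀).mul_left _
  have hbound : ∀ᶠ nm : ℤ × ℤ in cofinite, ∀ p ∈ closure Dsq ×ˢ Dsq,
      ‖K0 (p.1 + 2 * (nm.1 : ℂ)) (p.2 + 2 * (nm.2 : ℂ)) T‖ ≤ M nm :=
    eventually_cofinite_three_le_abs.mono fun nm hnm p hp =>
      norm_K0_shift_le (closure_Dsq_subset_closedSquare hp.1)
        (closure_Dsq_subset_closedSquare (subset_closure hp.2)) hT hnm
  refine ⟨fun z hz w hw => .of_norm_bounded_eventually hM ?_, _,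
    tendstoUniformlyOn_tsum_of_cofinite_eventually hM hbound⟩
  exact hbound.mono fun nm h => (norm_norm _).trans_le (h (z, w) ⟨hz, hw⟩)
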